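/- arXiv:2411.19729 — 3 statements merged into one kernel-verified Lean document; each statement's English description precedes it below -/
import Mathlib

section
/- Let h : ℝ^n → ℝ be L₀-Lipschitz and let α ∈ (0,1]. For any two probability measures 𝒟₁ and 𝒟₂ on ℝ^n with finite first moments, the Conditional Value at Risk of h at level α satisfies |CVaR_α(h_*𝒟₁) − CVaR_α(h_*𝒟₂)| ≤ (L₀/α) · W₁(𝒟₁, 𝒟₂), where h_*𝒟 denotes the pushforward of 𝒟 under h. -/
open MeasureTheory

/-- Conditional Value at Risk at level `α` of a real-valued distribution `μ`:
`CVaR_α(μ) = inf_t ( t + (1/α) ∫ max(z − t, 0) dμ(z) )`. -/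
noncomputable def CVaR (α : ℝ) (μ : Measure ℝ) : ℝ :=
  ⨅ t : ℝ, (t + (1 / α) * ∫ z, max (z - t) 0 ∂μ)

/-- Type-1 Wasserstein distance on `ℝ^n`: infimum over couplings `π` of
`∫ ‖x − y‖ dπ(x,y)`. -/
noncomputable def W1 {n : ℕ} (μ ν : Measure (EuclideanSpace ℝ (Fin n))) : ℝ :=
  sInf {r : ℝ |
    ∃ π : Measure (EuclideanSpace ℝ (Fin n) × EuclideanSpace ℝ (Fin n)),
      IsProbabilityMeasure π ∧ π.map Prod.fst = μ ∧ π.map Prod.snd = ν ∧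
      r = ∫ p, ‖p.1 - p.2‖ ∂π}

/-! For each threshold `t`, `z ↦ (z - t)⁺` is `1`-Lipschitz, so integrating against a coupling
`π` of `𝒟₁` and `𝒟₂` shows that the CVaR objectives of `h_*𝒟₁` and `h_*𝒟₂` at `t` differ by at
most `(1/α) ∫ |h x - h y| dπ ≤ (L₀/α) ∫ ‖x - y‖ dπ`. Taking the infimum over `t`, and then over
couplings, gives the bound. -/

section Marginals

variable {X Y : Type*} [MeasurableSpace X] [MeasurableSpace Y] {ρ : Measure (X × Y)}
  {μ : Measure X} {ν : Measure Y}

theorem integrable_comp_fst_of_map_fst_eq (hρ : ρ.map Prod.fst = μ) {f : X → ℝ}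
    (hf : Integrable f μ) : Integrable (fun p => f p.1) ρ := by
  subst hρ; exact hf.comp_measurable measurable_fst

theorem integrable_comp_snd_of_map_snd_eq (hρ : ρ.map Prod.snd = ν) {f : Y → ℝ}
    (hf : Integrable f ν) : Integrable (fun p => f p.2) ρ := by
  subst hρ; exact hf.comp_measurable measurable_snd

theorem integral_comp_fst_of_map_fst_eq (hρ : ρ.map Prod.fst = μ) {f : X → ℝ}
    (hf : AEStronglyMeasurable f μ) : ∫ p, f p.1 ∂ρ = ∫ x, f x ∂μ := by
  subst hρ; exact (integral_map measurable_fst.aemeasurable hf).symm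

theorem integral_comp_snd_of_map_snd_eq (hρ : ρ.map Prod.snd = ν) {f : Y → ℝ}
    (hf : AEStronglyMeasurable f ν) : ∫ p, f p.2 ∂ρ = ∫ y, f y ∂ν := by
  subst hρ; exact (integral_map measurable_snd.aemeasurable hf).symm

end Marginals

noncomputable def cvarObjective (α : ℝ) (ν : Measure ℝ) (t : ℝ) : ℝ :=
  t + (1 / α) * ∫ z, max (z - t) 0 ∂ν

section RealDistributions

variable {α : ℝ} {ν ν₁ ν₂ : Measure ℝ}

theorem CVaR_eq_iInf_cvarObjective : CVaR α ν = ⨅ t, cvarObjective α ν t := rfl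

/-- For `α ≤ 1`, `t + (z - t)⁺ / α ≥ t + (z - t) = z`. -/
theorem integral_le_cvarObjective [IsProbabilityMeasure ν] (hν : Integrable (fun z => z) ν)
    (hα : α ∈ Set.Ioc (0 : ℝ) 1) (t : ℝ) : ∫ z, z ∂ν ≤ cvarObjective α ν t := by
  have hν_sub : Integrable (fun z => z - t) ν := hν.sub (integrable_const t)
  have hpos : 0 ≤ ∫ z, max (z - t) 0 ∂ν := integral_nonneg fun z => le_max_right _ _
  have hmean : ∫ z, z ∂ν - t ≤ ∫ z, max (z - t) 0 ∂ν :=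
    calc ∫ z, z ∂ν - t = ∫ z, (z - t) ∂ν := by
          rw [integral_sub hν (integrable_const t), integral_const, probReal_univ, one_smul]
      _ ≤ ∫ z, max (z - t) 0 ∂ν := integral_mono hν_sub hν_sub.pos_part fun z => le_max_left _ _
  have hinv : 1 ≤ 1 / α := by rw [le_div_iff₀ hα.1]; linarith [hα.2]
  unfold cvarObjective
  nlinarith

theorem bddBelow_range_cvarObjective [IsProbabilityMeasure ν] (hν : Integrable (fun z => z) ν)
    (hα : α ∈ Set.Ioc (0 : ℝ) 1) : BddBelow (Set.range (cvarObjective α ν)) :=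
  ⟨∫ z, z ∂ν, Set.forall_mem_range.2 (integral_le_cvarObjective hν hα)⟩

theorem cvarObjective_le_add_of_coupling [IsFiniteMeasure ν₂] {ρ : Measure (ℝ × ℝ)}
    (hρ₁ : ρ.map Prod.fst = ν₁) (hρ₂ : ρ.map Prod.snd = ν₂) (hν₁ : Integrable (fun z => z) ν₁)
    (hν₂ : Integrable (fun z => z) ν₂) (hα : 0 < α) (t : ℝ) :
    cvarObjective α ν₁ t ≤ cvarObjective α ν₂ t + (1 / α) * ∫ p, |p.1 - p.2| ∂ρ := by
  have hplus : Measurable fun z : ℝ => max (z - t) 0 := by fun_prop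
  have hcost : Integrable (fun p : ℝ × ℝ => |p.1 - p.2|) ρ :=
    ((integrable_comp_fst_of_map_fst_eq hρ₁ hν₁).sub
      (integrable_comp_snd_of_map_snd_eq hρ₂ hν₂)).abs
  have hplus₂ : Integrable (fun p : ℝ × ℝ => max (p.2 - t) 0) ρ :=
    integrable_comp_snd_of_map_snd_eq hρ₂ (hν₂.sub (integrable_const t)).pos_part
  have hpointwise (p : ℝ × ℝ) : max (p.1 - t) 0 ≤ max (p.2 - t) 0 + |p.1 - p.2| := by
    have := le_abs_self (p.1 - p.2)
    have := le_max_left (p.2 - t) 0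
    have := le_max_right (p.2 - t) 0
    exact max_le (by linarith) (by positivity)
  have hint : ∫ z, max (z - t) 0 ∂ν₁ ≤ ∫ z, max (z - t) 0 ∂ν₂ + ∫ p, |p.1 - p.2| ∂ρ := by
    rw [← integral_comp_fst_of_map_fst_eq hρ₁ hplus.aestronglyMeasurable,
      ← integral_comp_snd_of_map_snd_eq hρ₂ hplus.aestronglyMeasurable,
      ← integral_add hplus₂ hcost]
    exact integral_mono_of_nonneg (ae_of_all _ fun p => le_max_right _ _) (hplus₂.add hcost)
      (ae_of_all _ hpointwise)
  unfold cvarObjective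
  have := mul_le_mul_of_nonneg_left hint (one_div_nonneg.2 hα.le)
  linarith

theorem CVaR_le_add_of_coupling [IsProbabilityMeasure ν₁] [IsFiniteMeasure ν₂]
    {ρ : Measure (ℝ × ℝ)}
    (hρ₁ : ρ.map Prod.fst = ν₁) (hρ₂ : ρ.map Prod.snd = ν₂) (hν₁ : Integrable (fun z => z) ν₁)
    (hν₂ : Integrable (fun z => z) ν₂) (hα : α ∈ Set.Ioc (0 : ℝ) 1) :
    CVaR α ν₁ ≤ CVaR α ν₂ + (1 / α) * ∫ p, |p.1 - p.2| ∂ρ := by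
  rw [CVaR_eq_iInf_cvarObjective, CVaR_eq_iInf_cvarObjective, ← sub_le_iff_le_add]
  refine le_ciInf fun t => sub_le_iff_le_add.2 ?_
  exact (ciInf_le (bddBelow_range_cvarObjective hν₁ hα) t).trans
    (cvarObjective_le_add_of_coupling hρ₁ hρ₂ hν₁ hν₂ hα.1 t)

theorem abs_sub_CVaR_le_of_coupling [IsProbabilityMeasure ν₁] [IsProbabilityMeasure ν₂]
    {ρ : Measure (ℝ × ℝ)} (hρ₁ : ρ.map Prod.fst = ν₁) (hρ₂ : ρ.map Prod.snd = ν₂)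
    (hν₁ : Integrable (fun z => z) ν₁) (hν₂ : Integrable (fun z => z) ν₂)
    (hα : α ∈ Set.Ioc (0 : ℝ) 1) :
    |CVaR α ν₁ - CVaR α ν₂| ≤ (1 / α) * ∫ p, |p.1 - p.2| ∂ρ := by
  have hswap₁ : (ρ.map Prod.swap).map Prod.fst = ν₂ := by
    rw [Measure.map_map measurable_fst measurable_swap]; exact hρ₂
  have hswap₂ : (ρ.map Prod.swap).map Prod.snd = ν₁ := by
    rw [Measure.map_map measurable_snd measurable_swap]; exact hρ₁
  have hcost_swap : ∫ p, |p.1 - p.2| ∂(ρ.map Prod.swap) = ∫ p, |p.1 - p.2| ∂ρ := by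
    rw [integral_map measurable_swap.aemeasurable (by fun_prop)]
    simp only [Prod.fst_swap, Prod.snd_swap, abs_sub_comm]
  have h₁₂ := CVaR_le_add_of_coupling hρ₁ hρ₂ hν₁ hν₂ hα
  have h₂₁ := CVaR_le_add_of_coupling hswap₁ hswap₂ hν₂ hν₁ hα
  rw [hcost_swap] at h₂₁
  exact abs_sub_le_iff.2 ⟨by linarith, by linarith⟩

end RealDistributions

theorem le_mul_csInf_of_forall_le_mul {s : Set ℝ} {a c : ℝ} (hs : s.Nonempty)
    (hbdd : BddBelow s) (h : ∀ r ∈ s, a ≤ c * r) : a ≤ c * sInf s := by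
  rcases le_or_gt c 0 with hc | hc
  · obtain ⟨r, hr⟩ := hs
    exact (h r hr).trans (mul_le_mul_of_nonpos_left (csInf_le hbdd hr) hc)
  · rw [← div_le_iff₀' hc]
    exact le_csInf hs fun r hr => (div_le_iff₀' hc).2 (h r hr)

section LipschitzPushforward

variable {E : Type*} [NormedAddCommGroup E] [MeasurableSpace E] [BorelSpace E]
  {μ μ₁ μ₂ : Measure E} {h : E → ℝ}

theorem LipschitzWith.integrable_of_integrable_norm [IsFiniteMeasure μ] {K : NNReal}
    (hh : LipschitzWith K h) (hμ : Integrable (fun x => ‖x‖) μ) : Integrable h μ := by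
  refine Integrable.mono' ((integrable_const |h 0|).add (hμ.const_mul K))
    hh.continuous.aestronglyMeasurable (ae_of_all _ fun x => ?_)
  have := hh.dist_le_mul x 0
  rw [Real.dist_eq, dist_zero_right] at this
  rw [Real.norm_eq_abs, Pi.add_apply]
  linarith [abs_sub_abs_le_abs_sub (h x) (h 0)]

theorem LipschitzWith.integrable_id_map [IsFiniteMeasure μ] {K : NNReal}
    (hh : LipschitzWith K h) (hμ : Integrable (fun x => ‖x‖) μ) :
    Integrable (fun z => z) (μ.map h) :=
  (integrable_map_measure aestronglyMeasurable_id hh.continuous.measurable.aemeasurable).2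
    (hh.integrable_of_integrable_norm hμ)

variable [SecondCountableTopology E] {α L : ℝ}

theorem abs_sub_CVaR_map_le_of_coupling [IsProbabilityMeasure μ₁] [IsProbabilityMeasure μ₂]
    (hLip : ∀ x y, |h x - h y| ≤ L * ‖x - y‖)
    (hμ₁ : Integrable (fun x => ‖x‖) μ₁) (hμ₂ : Integrable (fun x => ‖x‖) μ₂)
    {π : Measure (E × E)} (hπ₁ : π.map Prod.fst = μ₁) (hπ₂ : π.map Prod.snd = μ₂)
    (hα : α ∈ Set.Ioc (0 : ℝ) 1) :
    |CVaR α (μ₁.map h) - CVaR α (μ₂.map h)| ≤ L / α * ∫ p, ‖p.1 - p.2‖ ∂π := by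
  have hh : LipschitzWith (Real.toNNReal L) h :=
    LipschitzWith.of_dist_le' fun x y => by simpa [Real.dist_eq, dist_eq_norm] using hLip x y
  have hmeas : Measurable h := hh.continuous.measurable
  have := Measure.isProbabilityMeasure_map (μ := μ₁) hmeas.aemeasurable
  have := Measure.isProbabilityMeasure_map (μ := μ₂) hmeas.aemeasurable
  -- the image of `π` under `h × h` couples the two pushforward distributions
  set ρ := π.map (Prod.map h h)
  have hρ₁ : ρ.map Prod.fst = μ₁.map h := by
    rw [Measure.map_map measurable_fst (hmeas.prodMap hmeas), ← hπ₁,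
      Measure.map_map hmeas measurable_fst]
    rfl
  have hρ₂ : ρ.map Prod.snd = μ₂.map h := by
    rw [Measure.map_map measurable_snd (hmeas.prodMap hmeas), ← hπ₂,
      Measure.map_map hmeas measurable_snd]
    rfl
  have hcost_int : Integrable (fun p : E × E => ‖p.1 - p.2‖) π :=
    ((integrable_comp_fst_of_map_fst_eq hπ₁ hμ₁).add
      (integrable_comp_snd_of_map_snd_eq hπ₂ hμ₂)).mono' (by fun_prop)
      (ae_of_all _ fun p => by simpa using norm_sub_le p.1 p.2)
  have hcost : ∫ p, |p.1 - p.2| ∂ρ ≤ L * ∫ p, ‖p.1 - p.2‖ ∂π := by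
    rw [integral_map (hmeas.prodMap hmeas).aemeasurable (by fun_prop), ← integral_const_mul]
    exact integral_mono_of_nonneg (ae_of_all _ fun _ => abs_nonneg _) (hcost_int.const_mul L)
      (ae_of_all _ fun p => hLip p.1 p.2)
  calc |CVaR α (μ₁.map h) - CVaR α (μ₂.map h)| ≤ 1 / α * ∫ p, |p.1 - p.2| ∂ρ :=
        abs_sub_CVaR_le_of_coupling hρ₁ hρ₂ (hh.integrable_id_map hμ₁)
          (hh.integrable_id_map hμ₂) hα
    _ ≤ 1 / α * (L * ∫ p, ‖p.1 - p.2‖ ∂π) := by have := hα.1; gcongr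
    _ = L / α * ∫ p, ‖p.1 - p.2‖ ∂π := by ring

end LipschitzPushforward

/-- the CVaR of an `L₀`-Lipschitz performance function is
`(L₀/α)`-Lipschitz with respect to the Wasserstein distance between the two
underlying distributions. -/
theorem cvar_wasserstein_lipschitz {n : ℕ}
    (L₀ : ℝ) (h : EuclideanSpace ℝ (Fin n) → ℝ)
    (hLip : ∀ x y : EuclideanSpace ℝ (Fin n), |h x - h y| ≤ L₀ * ‖x - y‖)
    (α : ℝ) (hα : α ∈ Set.Ioc (0 : ℝ) 1)
    (𝒟₁ 𝒟₂ : Measure (EuclideanSpace ℝ (Fin n)))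
    [IsProbabilityMeasure 𝒟₁] [IsProbabilityMeasure 𝒟₂]
    (h𝒟₁ : Integrable (fun x => ‖x‖) 𝒟₁)
    (h𝒟₂ : Integrable (fun x => ‖x‖) 𝒟₂) :
    |CVaR α (𝒟₁.map h) - CVaR α (𝒟₂.map h)| ≤ (L₀ / α) * W1 𝒟₁ 𝒟₂ := by
  refine le_mul_csInf_of_forall_le_mul
    ⟨_, 𝒟₁.prod 𝒟₂, inferInstance, by simp, by simp, rfl⟩ ⟨0, ?_⟩ ?_
  · rintro r ⟨π, -, -, -, rfl⟩
    exact integral_nonneg fun _ => norm_nonneg _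
  · rintro r ⟨π, -, hπ₁, hπ₂, rfl⟩
    exact abs_sub_CVaR_map_le_of_coupling hLip h𝒟₁ h𝒟₂ hπ₁ hπ₂ hα
end

section
/- Let n ≥ 3, let ν be a probability measure on ℝ^n whose support has diameter ρ < ∞, let h : ℝ^n → ℝ be L₀-Lipschitz with L₀ > 0 and ρ > 0, and fix α ∈ (0,1], β ∈ (0,1), and a target bound H > 0. If the integer N ≥ 1 satisfies N ≥ ( L₀ · ρ · ( C* + √n · (2 ln(1/β))^{1/2} ) / (α H) )^n, where C* = √n · 2^{(n−2)/2} · (1/(1 − 2^{1−n/2}) + 2), then (L₀/α) · ρ · ( C* · N^{−1/n} + √n · (2 ln(1/β))^{1/2} · N^{−1/2} ) ≤ H; consequently, with probability at least 1 − β over N i.i.d. samples from ν, |CVaR_α(h_*ν̂_N) − CVaR_α(h_*ν)| ≤ H. -/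
open MeasureTheory BigOperators

/-- Empirical measure `(1/N) Σ_{i=1}^N δ_{y_i}` of the sample `ys`. -/
noncomputable def empiricalMeasure {n N : ℕ}
    (ys : Fin N → EuclideanSpace ℝ (Fin n)) : Measure (EuclideanSpace ℝ (Fin n)) :=
  (N : ENNReal)⁻¹ • ∑ i : Fin N, Measure.dirac (ys i)

open ProbabilityTheory Real Set

/-!
Since `h` is `L₀`-Lipschitz, `h_*ν` lives on an interval `[m, m + L₀ρ]`. Writing
`CVaR_α μ = inf_t (t + 𝔼_μ (Z - t)⁺ / α)`, the stop-loss transform `t ↦ 𝔼_μ (Z - t)⁺` is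
1-Lipschitz, has slope `-1` below `m` and vanishes above `m + L₀ρ`. Hence the CVaRs of two laws on
that interval differ by at most `1/α` times the largest gap between their stop-loss transforms on
a grid of `k + 1` thresholds, plus `2 L₀ρ / k`. Hoeffding's inequality at each grid point and a
union bound control the empirical gaps; with `k = ⌈N^{1/n}⌉` both the grid error and the
`log (k + 1)` of the union bound are absorbed by `C* N^{-1/n}`, because `C* ≥ 5` and `n ≥ 3`.
-/

section Hoeffding

variable {Ω : Type*} [MeasurableSpace Ω] {ν : Measure Ω} [IsProbabilityMeasure ν]
  {g : Ω → ℝ} {a b : ℝ}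

lemma measureReal_pi_le_sum_sub_integral_le (hg : AEMeasurable g ν)
    (hab : ∀ᵐ x ∂ν, g x ∈ Icc a b) (N : ℕ) {ε : ℝ} (hε : 0 ≤ ε) :
    (Measure.pi fun _ : Fin N => ν).real {ys | ε ≤ ∑ i, (g (ys i) - ν[g])}
      ≤ exp (-2 * ε ^ 2 / (N * (b - a) ^ 2)) := by
  have hsubG (i : Fin N) : HasSubgaussianMGF (fun ys : Fin N → Ω => g (ys i) - ν[g])
      ((‖b - a‖₊ / 2) ^ 2) (Measure.pi fun _ : Fin N => ν) := by
    refine HasSubgaussianMGF.of_map (X := fun x => g x - ν[g])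
      (measurePreserving_eval (fun _ : Fin N => ν) i).measurable.aemeasurable ?_
    rw [(measurePreserving_eval (fun _ : Fin N => ν) i).map_eq]
    exact hasSubgaussianMGF_of_mem_Icc hg hab
  have hindep := iIndepFun_pi (μ := fun _ : Fin N => ν) (X := fun _ x => g x - ν[g])
    fun _ => hg.sub_const _
  refine (HasSubgaussianMGF.measure_sum_ge_le_of_iIndepFun hindep
    (fun i _ => hsubG i) hε).trans_eq ?_
  congr 1
  simp only [Finset.sum_const, Finset.card_univ, Fintype.card_fin, nsmul_eq_mul]
  push_cast
  rw [Real.norm_eq_abs, div_pow, sq_abs,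
    show (2 : ℝ) * (N * ((b - a) ^ 2 / 2 ^ 2)) = N * (b - a) ^ 2 / 2 by ring, div_div_eq_mul_div]
  ring

lemma measureReal_pi_le_abs_mean_sub_integral_le (hg : AEMeasurable g ν)
    (hab : ∀ᵐ x ∂ν, g x ∈ Icc a b) {N : ℕ} (hN : N ≠ 0) {ε : ℝ} (hε : 0 ≤ ε) :
    (Measure.pi fun _ : Fin N => ν).real {ys | ε ≤ |(N : ℝ)⁻¹ * ∑ i, g (ys i) - ν[g]|}
      ≤ 2 * exp (-2 * N * ε ^ 2 / (b - a) ^ 2) := by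
  have hNpos : (0 : ℝ) < N := by positivity
  have hupper := measureReal_pi_le_sum_sub_integral_le hg hab N (mul_nonneg hNpos.le hε)
  have hlower := measureReal_pi_le_sum_sub_integral_le (g := fun x => -g x) hg.neg
    (a := -b) (b := -a)
    (by filter_upwards [hab] with x hx using ⟨neg_le_neg hx.2, neg_le_neg hx.1⟩)
    N (mul_nonneg hNpos.le hε)
  have hexp : -2 * (N * ε) ^ 2 / (N * (b - a) ^ 2) = -2 * N * ε ^ 2 / (b - a) ^ 2 := by
    rw [mul_pow, sq (N : ℝ), ← mul_div_mul_left (-2 * N * ε ^ 2) ((b - a) ^ 2) hNpos.ne']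
    ring
  rw [neg_sub_neg, hexp] at hlower
  rw [hexp] at hupper
  have hsplit : {ys : Fin N → Ω | ε ≤ |(N : ℝ)⁻¹ * ∑ i, g (ys i) - ν[g]|} ⊆
      {ys | N * ε ≤ ∑ i, (g (ys i) - ν[g])} ∪
        {ys | N * ε ≤ ∑ i, (-g (ys i) - ν[fun x => -g x])} := by
    intro ys hys
    have hmean :
        (N : ℝ)⁻¹ * ∑ i, g (ys i) - ν[g] = (N : ℝ)⁻¹ * ∑ i, (g (ys i) - ν[g]) := by
      simp [Finset.sum_sub_distrib, mul_sub, hNpos.ne']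
    rw [mem_ofPred_eq, hmean, abs_mul, abs_inv, Nat.abs_cast, le_inv_mul_iff₀ hNpos] at hys
    have hneg : ∑ i, (-g (ys i) - ν[fun x => -g x]) = -∑ i, (g (ys i) - ν[g]) := by
      rw [integral_neg, ← Finset.sum_neg_distrib]
      exact Finset.sum_congr rfl fun i _ => by ring
    rcases le_abs'.1 hys with h | h
    · right; rw [mem_ofPred_eq, hneg]; linarith
    · left; exact h
  calc _ ≤ _ := measureReal_mono hsplit
    _ ≤ _ := measureReal_union_le _ _
    _ ≤ _ := add_le_add hupper hlower
    _ = _ := by ring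

end Hoeffding

lemma ciInf_le_ciInf_add {ι : Type*} [Nonempty ι] {f g : ι → ℝ} {c : ℝ}
    (hf : BddBelow (range f)) (hfg : ∀ i, f i ≤ g i + c) : ⨅ i, f i ≤ (⨅ i, g i) + c := by
  have := le_ciInf fun i => sub_le_iff_le_add.2 ((ciInf_le hf i).trans (hfg i))
  linarith

lemma abs_ciInf_sub_ciInf_le {ι : Type*} [Nonempty ι] {f g : ι → ℝ} {c : ℝ}
    (hf : BddBelow (range f)) (hg : BddBelow (range g)) (hfg : ∀ i, |f i - g i| ≤ c) :
    |(⨅ i, f i) - ⨅ i, g i| ≤ c := by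
  have hfg' := ciInf_le_ciInf_add hf fun i => sub_le_iff_le_add'.1 (abs_sub_le_iff.1 (hfg i)).1
  have hgf := ciInf_le_ciInf_add hg fun i => sub_le_iff_le_add'.1 (abs_sub_le_iff.1 (hfg i)).2
  exact abs_sub_le_iff.2 ⟨by linarith, by linarith⟩

/-- The stop-loss transform; `CVaR α μ` is by definition `⨅ t, t + 1 / α * stopLoss μ t`. -/
noncomputable def stopLoss (μ : Measure ℝ) (t : ℝ) : ℝ := ∫ z, max (z - t) 0 ∂μ

namespace stopLoss

variable {μ : Measure ℝ}

lemma integrable_max_sub [IsFiniteMeasure μ] (hμ : Integrable (fun z => z) μ) (t : ℝ) :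
    Integrable (fun z => max (z - t) 0) μ :=
  (hμ.sub (integrable_const t)).pos_part

lemma lipschitzWith [IsProbabilityMeasure μ] (hμ : Integrable (fun z => z) μ) :
    LipschitzWith 1 (stopLoss μ) := by
  refine LipschitzWith.of_dist_le_mul fun t t' => ?_
  rw [Real.dist_eq, Real.dist_eq, stopLoss, stopLoss, NNReal.coe_one, one_mul,
    ← integral_sub (integrable_max_sub hμ t) (integrable_max_sub hμ t')]
  have hpt (z : ℝ) : ‖max (z - t) 0 - max (z - t') 0‖ ≤ |t - t'| :=
    (abs_max_sub_max_le_abs _ _ _).trans_eq (by rw [abs_sub_comm]; ring_nf)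
  simpa using norm_integral_le_of_norm_le_const (μ := μ) (ae_of_all _ hpt)

lemma eq_zero_of_ae_le {t : ℝ} (hμ : ∀ᵐ z ∂μ, z ≤ t) : stopLoss μ t = 0 :=
  integral_eq_zero_of_ae <| hμ.mono fun _ hz => max_eq_right (sub_nonpos.2 hz)

lemma eq_add_sub_of_le [IsProbabilityMeasure μ] (hμ : Integrable (fun z => z) μ) {m t : ℝ}
    (hm : ∀ᵐ z ∂μ, m ≤ z) (ht : t ≤ m) : stopLoss μ t = stopLoss μ m + (m - t) := by
  have hshift : (fun z => max (z - t) 0) =ᵐ[μ] fun z => max (z - m) 0 + (m - t) :=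
    hm.mono fun z hz => by
      dsimp only
      rw [max_eq_left (by linarith), max_eq_left (by linarith)]
      ring
  rw [stopLoss, integral_congr_ae hshift, integral_add (integrable_max_sub hμ m)
    (integrable_const _), integral_const, stopLoss]
  simp

lemma integral_le_add [IsProbabilityMeasure μ] (hμ : Integrable (fun z => z) μ) (t : ℝ) :
    ∫ z, z ∂μ ≤ t + stopLoss μ t := by
  have : ∫ z, (z - t) ∂μ ≤ stopLoss μ t :=
    integral_mono (hμ.sub (integrable_const t)) (integrable_max_sub hμ t) fun z => le_max_left _ _
  rw [integral_sub hμ (integrable_const t), integral_const] at this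
  simp only [probReal_univ, smul_eq_mul, one_mul] at this
  linarith

lemma bddBelow_range_add_one_div_mul [IsProbabilityMeasure μ] (hμ : Integrable (fun z => z) μ)
    {α : ℝ} (hα0 : 0 < α) (hα1 : α ≤ 1) : BddBelow (range fun t => t + 1 / α * stopLoss μ t) := by
  refine ⟨∫ z, z ∂μ, forall_mem_range.2 fun t => (integral_le_add hμ t).trans ?_⟩
  have h0 : 0 ≤ stopLoss μ t := integral_nonneg fun z => le_max_right _ _
  have : stopLoss μ t ≤ 1 / α * stopLoss μ t :=
    le_mul_of_one_le_left h0 (one_le_one_div hα0 hα1)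
  linarith

lemma abs_sub_le_of_net {μ₁ μ₂ : Measure ℝ}
    [IsProbabilityMeasure μ₁] [IsProbabilityMeasure μ₂] {m D s : ℝ} (hD : 0 < D)
    {k : ℕ} (hk : k ≠ 0)
    (h₁ : ∀ᵐ z ∂μ₁, z ∈ Icc m (m + D)) (h₂ : ∀ᵐ z ∂μ₂, z ∈ Icc m (m + D))
    (hnet : ∀ j ≤ k,
      |stopLoss μ₁ (m + j * (D / k)) - stopLoss μ₂ (m + j * (D / k))| ≤ s) (t : ℝ) :
    |stopLoss μ₁ t - stopLoss μ₂ t| ≤ s + 2 * (D / k) := by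
  have hi₁ : Integrable (fun z => z) μ₁ := Integrable.of_mem_Icc m (m + D) aemeasurable_id h₁
  have hi₂ : Integrable (fun z => z) μ₂ := Integrable.of_mem_Icc m (m + D) aemeasurable_id h₂
  set δ := D / k with hδdef
  have hδ : 0 < δ := by positivity
  have hnet₀ : |stopLoss μ₁ m - stopLoss μ₂ m| ≤ s := by simpa using hnet 0 k.zero_le
  have hs : 0 ≤ s := (abs_nonneg _).trans hnet₀
  rcases le_or_gt t m with htm | hmt
  · rw [eq_add_sub_of_le hi₁ (h₁.mono fun _ hz => hz.1) htm,
      eq_add_sub_of_le hi₂ (h₂.mono fun _ hz => hz.1) htm, add_sub_add_right_eq_sub]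
    linarith
  rcases le_or_gt (m + D) t with hMt | htM
  · rw [eq_zero_of_ae_le (h₁.mono fun _ hz => hz.2.trans hMt),
      eq_zero_of_ae_le (h₂.mono fun _ hz => hz.2.trans hMt), sub_zero, abs_zero]
    positivity
  set j := ⌊(t - m) / δ⌋₊
  have hjk : j ≤ k := Nat.floor_le_of_le <| by
    rw [div_le_iff₀ hδ, hδdef, mul_div_cancel₀ _ (by positivity)]
    linarith
  have hj₁ : j * δ ≤ t - m := (le_div_iff₀ hδ).1 (Nat.floor_le (by positivity))
  have hj₂ : t - m < (j + 1) * δ := (div_lt_iff₀ hδ).1 (Nat.lt_floor_add_one _)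
  have hdist : dist t (m + j * δ) ≤ δ := by
    rw [Real.dist_eq, abs_le]; constructor <;> nlinarith
  have hL₁ := ((lipschitzWith hi₁).dist_le_mul t (m + j * δ)).trans (by simpa using hdist)
  have hL₂ := ((lipschitzWith hi₂).dist_le_mul t (m + j * δ)).trans (by simpa using hdist)
  have hnetj := hnet j hjk
  rw [Real.dist_eq] at hL₁ hL₂
  rw [abs_le] at hL₁ hL₂ hnetj ⊢
  constructor <;> linarith

end stopLoss

lemma abs_CVaR_sub_le {μ₁ μ₂ : Measure ℝ} [IsProbabilityMeasure μ₁] [IsProbabilityMeasure μ₂]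
    (hi₁ : Integrable (fun z => z) μ₁) (hi₂ : Integrable (fun z => z) μ₂) {α c : ℝ}
    (hα0 : 0 < α) (hα1 : α ≤ 1) (hc : ∀ t, |stopLoss μ₁ t - stopLoss μ₂ t| ≤ c) :
    |CVaR α μ₁ - CVaR α μ₂| ≤ c / α := by
  refine abs_ciInf_sub_ciInf_le (stopLoss.bddBelow_range_add_one_div_mul hi₁ hα0 hα1)
    (stopLoss.bddBelow_range_add_one_div_mul hi₂ hα0 hα1) fun t => ?_
  rw [add_sub_add_left_eq_sub, ← mul_sub, abs_mul, abs_of_pos (one_div_pos.2 hα0),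
    one_div_mul_eq_div]
  exact div_le_div_of_nonneg_right (hc t) hα0.le

lemma stopLoss_map {Ω : Type*} [MeasurableSpace Ω] {μ : Measure Ω} {f : Ω → ℝ}
    (hf : AEMeasurable f μ) (t : ℝ) : stopLoss (μ.map f) t = ∫ x, max (f x - t) 0 ∂μ :=
  integral_map hf (by fun_prop : Continuous fun z : ℝ => max (z - t) 0).aestronglyMeasurable

section Empirical

variable {n N : ℕ} (ys : Fin N → EuclideanSpace ℝ (Fin n))

lemma isProbabilityMeasure_empiricalMeasure (hN : N ≠ 0) :
    IsProbabilityMeasure (empiricalMeasure ys) := by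
  constructor
  simp [empiricalMeasure, ENNReal.inv_mul_cancel, hN]

lemma integral_empiricalMeasure (f : EuclideanSpace ℝ (Fin n) → ℝ) :
    ∫ x, f x ∂(empiricalMeasure ys) = (N : ℝ)⁻¹ * ∑ i, f (ys i) := by
  rw [empiricalMeasure, integral_smul_measure,
    integral_finsetSum_measure fun i _ => integrable_dirac enorm_lt_top]
  simp [integral_dirac]

lemma ae_empiricalMeasure {P : EuclideanSpace ℝ (Fin n) → Prop} (hP : ∀ i, P (ys i)) :
    ∀ᵐ x ∂(empiricalMeasure ys), P x := by
  rw [ae_iff, empiricalMeasure]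
  simp [Measure.dirac_apply, hP]

end Empirical

lemma abs_CVaR_empiricalMeasure_sub_le_of_net {n N : ℕ} (hN : N ≠ 0)
    (ν : Measure (EuclideanSpace ℝ (Fin n))) [IsProbabilityMeasure ν]
    {h : EuclideanSpace ℝ (Fin n) → ℝ} (hh : Measurable h) {m D : ℝ} (hD : 0 < D)
    (hν : ∀ᵐ x ∂ν, h x ∈ Icc m (m + D)) {α : ℝ} (hα0 : 0 < α) (hα1 : α ≤ 1)
    {k : ℕ} (hk : k ≠ 0) {s : ℝ} (ys : Fin N → EuclideanSpace ℝ (Fin n))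
    (hys : ∀ i, h (ys i) ∈ Icc m (m + D))
    (hnet : ∀ j ≤ k, |(N : ℝ)⁻¹ * ∑ i, max (h (ys i) - (m + j * (D / k))) 0 -
      ∫ x, max (h x - (m + j * (D / k))) 0 ∂ν| ≤ s) :
    |CVaR α ((empiricalMeasure ys).map h) - CVaR α (ν.map h)| ≤ (s + 2 * (D / k)) / α := by
  have := isProbabilityMeasure_empiricalMeasure ys hN
  have := Measure.isProbabilityMeasure_map (μ := empiricalMeasure ys) hh.aemeasurable
  have := Measure.isProbabilityMeasure_map (μ := ν) hh.aemeasurable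
  have h₁ : ∀ᵐ z ∂(empiricalMeasure ys).map h, z ∈ Icc m (m + D) :=
    (ae_map_iff hh.aemeasurable measurableSet_Icc).2 (ae_empiricalMeasure ys hys)
  have h₂ : ∀ᵐ z ∂ν.map h, z ∈ Icc m (m + D) :=
    (ae_map_iff hh.aemeasurable measurableSet_Icc).2 hν
  refine abs_CVaR_sub_le (Integrable.of_mem_Icc _ _ aemeasurable_id h₁)
    (Integrable.of_mem_Icc _ _ aemeasurable_id h₂) hα0 hα1
    (stopLoss.abs_sub_le_of_net hD hk h₁ h₂ fun j hj => ?_)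
  rw [stopLoss_map hh.aemeasurable, stopLoss_map hh.aemeasurable, integral_empiricalMeasure]
  exact hnet j hj

theorem measure_abs_CVaR_empiricalMeasure_sub_le {n N : ℕ} (hN : N ≠ 0)
    (ν : Measure (EuclideanSpace ℝ (Fin n))) [IsProbabilityMeasure ν]
    {h : EuclideanSpace ℝ (Fin n) → ℝ} (hh : Measurable h) {m D : ℝ} (hD : 0 < D)
    (hν : ∀ᵐ x ∂ν, h x ∈ Icc m (m + D)) {α : ℝ} (hα0 : 0 < α) (hα1 : α ≤ 1)
    {k : ℕ} (hk : k ≠ 0) {s : ℝ} (hs : 0 ≤ s) :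
    ENNReal.ofReal (1 - 2 * (k + 1) * exp (-2 * N * s ^ 2 / D ^ 2)) ≤
      (Measure.pi fun _ : Fin N => ν) {ys |
        |CVaR α ((empiricalMeasure ys).map h) - CVaR α (ν.map h)| ≤ (s + 2 * (D / k)) / α} := by
  set P := Measure.pi fun _ : Fin N => ν with hP
  have : IsProbabilityMeasure P := by rw [hP]; infer_instance
  set good := {ys : Fin N → EuclideanSpace ℝ (Fin n) |
    |CVaR α ((empiricalMeasure ys).map h) - CVaR α (ν.map h)| ≤ (s + 2 * (D / k)) / α}
  set t : ℕ → ℝ := fun j => m + j * (D / k)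
  set bad : ℕ → Set (Fin N → EuclideanSpace ℝ (Fin n)) := fun j =>
    {ys | s ≤ |(N : ℝ)⁻¹ * ∑ i, max (h (ys i) - t j) 0 - ∫ x, max (h x - t j) 0 ∂ν|}
  have ht (j : ℕ) : m ≤ t j := le_add_of_nonneg_right (by positivity)
  have hbad (j : ℕ) : P.real (bad j) ≤ 2 * exp (-2 * N * s ^ 2 / D ^ 2) := by
    simpa using measureReal_pi_le_abs_mean_sub_integral_le (a := 0) (b := D)
      ((hh.sub_const (t j)).max measurable_const).aemeasurable
      (hν.mono fun x hx => ⟨le_max_right _ _, max_le (by linarith [hx.2, ht j]) hD.le⟩) hN hs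
  have hunion : P.real (⋃ j ∈ Finset.range (k + 1), bad j) ≤
      2 * (k + 1) * exp (-2 * N * s ^ 2 / D ^ 2) := by
    refine (measureReal_biUnion_finset_le _ _).trans
      ((Finset.sum_le_sum fun j _ => hbad j).trans_eq ?_)
    rw [Finset.sum_const, Finset.card_range, nsmul_eq_mul]
    push_cast
    ring
  have hsample : ∀ᵐ ys ∂P, ∀ i, h (ys i) ∈ Icc m (m + D) :=
    ae_all_iff.2 fun i => (measurePreserving_eval (fun _ : Fin N => ν) i).quasiMeasurePreserving.ae
      (p := fun x => h x ∈ Icc m (m + D)) hν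
  have hgood : goodᶜ ≤ᵐ[P] ⋃ j ∈ Finset.range (k + 1), bad j := by
    filter_upwards [hsample] with ys hys hys_bad
    by_contra hys_net
    refine hys_bad (abs_CVaR_empiricalMeasure_sub_le_of_net hN ν hh hD hν hα0 hα1 hk ys hys
      fun j hj => (not_le.1 fun hj_bad => hys_net ?_).le)
    exact mem_biUnion (Finset.mem_range.2 (Nat.lt_succ_of_le hj)) hj_bad
  have hcompl : P goodᶜ ≤ ENNReal.ofReal (2 * (k + 1) * exp (-2 * N * s ^ 2 / D ^ 2)) := by
    refine (measure_mono_ae hgood).trans ?_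
    rw [← ofReal_measureReal (measure_ne_top P _)]
    exact ENNReal.ofReal_le_ofReal hunion
  calc ENNReal.ofReal (1 - 2 * (k + 1) * exp (-2 * N * s ^ 2 / D ^ 2))
      = 1 - ENNReal.ofReal (2 * (k + 1) * exp (-2 * N * s ^ 2 / D ^ 2)) := by
        rw [ENNReal.ofReal_sub _ (by positivity), ENNReal.ofReal_one]
    _ ≤ 1 - P goodᶜ := tsub_le_tsub_left hcompl 1
    _ ≤ P good := tsub_le_iff_right.2 (by simpa using measure_univ_le_add_compl (μ := P) good)

lemma five_le_sqrt_mul_rpow_mul {x : ℝ} (hx : 3 ≤ x) :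
    5 ≤ √x * (2 : ℝ) ^ ((x - 2) / 2) * (1 / (1 - (2 : ℝ) ^ (1 - x / 2)) + 2) := by
  have hsqrt : 5 / 3 ≤ √x := Real.le_sqrt_of_sq_le (by linarith)
  have hpow : 1 ≤ (2 : ℝ) ^ ((x - 2) / 2) := Real.one_le_rpow one_le_two (by linarith)
  have hq0 : 0 < (2 : ℝ) ^ (1 - x / 2) := by positivity
  have hq1 : (2 : ℝ) ^ (1 - x / 2) < 1 := Real.rpow_lt_one_of_one_lt_of_neg one_lt_two (by linarith)
  have hfrac : 1 ≤ 1 / (1 - (2 : ℝ) ^ (1 - x / 2)) := one_le_one_div (by linarith) (by linarith)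
  calc (5 : ℝ) = 5 / 3 * 1 * (1 + 2) := by norm_num
    _ ≤ _ := by gcongr

lemma mul_add_rpow_le_of_rpow_le {N n a b C G : ℝ} (hN : 1 ≤ N) (hn : 2 ≤ n) (ha : 0 ≤ a)
    (hb : 0 < b) (hC : 0 ≤ C) (hG : 0 ≤ G) (hsamp : (a * (C + G) / b) ^ n ≤ N) :
    a * (C * N ^ (-(1 : ℝ) / n) + G * N ^ (-(1 : ℝ) / 2)) ≤ b := by
  have hroot : a * (C + G) / b ≤ N ^ n⁻¹ :=
    (Real.le_rpow_inv_iff_of_pos (by positivity) (by linarith) (by linarith)).2 hsamp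
  have hpow : N ^ (-(1 : ℝ) / 2) ≤ N ^ (-(1 : ℝ) / n) := Real.rpow_le_rpow_of_exponent_le hN <| by
    rw [neg_div, neg_div, neg_le_neg_iff]
    exact one_div_le_one_div_of_le two_pos hn
  have hR : 0 < N ^ n⁻¹ := by positivity
  have hinv : N ^ (-(1 : ℝ) / n) = (N ^ n⁻¹)⁻¹ := by
    rw [neg_div, one_div, Real.rpow_neg (by linarith)]
  calc a * (C * N ^ (-(1 : ℝ) / n) + G * N ^ (-(1 : ℝ) / 2))
        ≤ a * (C + G) * N ^ (-(1 : ℝ) / n) := by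
        rw [mul_assoc, add_mul]; gcongr
    _ ≤ b := by
        rw [hinv, ← div_eq_mul_inv, div_le_iff₀ hR]
        rw [div_le_iff₀ hb] at hroot
        linarith

lemma sqrt_add_le_sqrt_add_sqrt {a b : ℝ} (ha : 0 ≤ a) (hb : 0 ≤ b) : √(a + b) ≤ √a + √b :=
  Real.sqrt_le_iff.2 ⟨by positivity, by
    nlinarith [Real.sq_sqrt ha, Real.sq_sqrt hb, Real.sqrt_nonneg a, Real.sqrt_nonneg b]⟩

lemma sqrt_log_div_add_two_div_le {N : ℝ} (hN : 1 ≤ N) {n : ℕ} (hn : 3 ≤ n) {β : ℝ}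
    (hβ0 : 0 < β) (hβ1 : β ≤ 1) {C : ℝ} (hC : 5 ≤ C) :
    √(log (2 * (⌈N ^ (n : ℝ)⁻¹⌉₊ + 1) / β) / (2 * N)) + 2 / ⌈N ^ (n : ℝ)⁻¹⌉₊ ≤
      C * N ^ (-(1 : ℝ) / n) + √n * √(2 * log (1 / β)) * N ^ (-(1 : ℝ) / 2) := by
  have hN0 : 0 < N := by linarith
  set P := N ^ (n : ℝ)⁻¹
  set k := ⌈P⌉₊
  have hP : 1 ≤ P := Real.one_le_rpow hN (by positivity)
  have hPn : P ^ n = N := Real.rpow_inv_natCast_pow (by linarith) (by omega)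
  have hkP : P ≤ k := Nat.le_ceil P
  have hk : (k : ℝ) < P + 1 := Nat.ceil_lt_add_one (by linarith)
  have hrate₁ : N ^ (-(1 : ℝ) / n) = 1 / P := by
    rw [neg_div, Real.rpow_neg (by linarith), one_div, one_div]
  have hrate₂ : N ^ (-(1 : ℝ) / 2) = 1 / √N := by
    rw [neg_div, Real.rpow_neg (by linarith), Real.sqrt_eq_rpow]
    exact (one_div _).symm
  set L := log (1 / β)
  have hL : 0 ≤ L := Real.log_nonneg (one_le_one_div hβ0 hβ1)
  have hsplit : log (2 * (k + 1) / β) / (2 * N) = log (2 * (k + 1)) / (2 * N) + L / (2 * N) := by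
    rw [div_eq_mul_one_div (2 * ((k : ℝ) + 1)) β, Real.log_mul (by positivity) (by positivity),
      add_div]
  have hnet : √(log (2 * (k + 1)) / (2 * N)) ≤ 3 / P := by
    refine Real.sqrt_le_iff.2 ⟨by positivity, ?_⟩
    have hlog : log (2 * (k + 1)) ≤ 6 * P := (Real.log_le_self (by positivity)).trans (by linarith)
    have hcube : P ^ 3 ≤ N := hPn ▸ pow_le_pow_right₀ hP hn
    rw [div_pow, div_le_div_iff₀ (by positivity) (by positivity)]
    nlinarith [mul_le_mul_of_nonneg_right hlog (sq_nonneg P)]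
  have hconf : √(L / (2 * N)) ≤ √n * √(2 * L) / √N := by
    calc √(L / (2 * N)) ≤ √(2 * L / N) := Real.sqrt_le_sqrt <| by
          rw [div_le_div_iff₀ (by positivity) (by positivity)]; nlinarith
      _ = √(2 * L) / √N := Real.sqrt_div (by positivity) N
      _ ≤ √n * √(2 * L) / √N := by
          gcongr
          exact le_mul_of_one_le_left (Real.sqrt_nonneg _)
            (Real.one_le_sqrt.2 (by exact_mod_cast (by omega : 1 ≤ n)))
  have hgrid : 2 / (k : ℝ) ≤ 2 / P := div_le_div_of_nonneg_left zero_le_two (by linarith) hkP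
  have hC' : 5 / P ≤ C / P := by gcongr
  rw [hrate₁, hrate₂, hsplit]
  calc √(log (2 * (k + 1)) / (2 * N) + L / (2 * N)) + 2 / k
      ≤ √(log (2 * (k + 1)) / (2 * N)) + √(L / (2 * N)) + 2 / k := by
        gcongr
        exact sqrt_add_le_sqrt_add_sqrt
          (div_nonneg (Real.log_nonneg (by linarith)) (by positivity)) (by positivity)
    _ ≤ 3 / P + √n * √(2 * L) / √N + 2 / P := by gcongr
    _ ≤ C * (1 / P) + √n * √(2 * L) * (1 / √N) := by
        rw [mul_one_div, mul_one_div]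
        linarith [show 3 / P + 2 / P = 5 / P by ring]

lemma mul_exp_neg_mul_sq_sqrt_log_div_eq {D β : ℝ} (hD : D ≠ 0) (hβ0 : 0 < β) (hβ1 : β ≤ 1)
    {N : ℕ} (hN : N ≠ 0) (k : ℕ) :
    2 * (k + 1) * exp (-2 * N * (D * √(log (2 * (k + 1) / β) / (2 * N))) ^ 2 / D ^ 2) = β := by
  have hlog : 0 ≤ log (2 * (k + 1) / β) :=
    Real.log_nonneg ((one_le_div hβ0).2 (by linarith [(k.cast_nonneg : (0 : ℝ) ≤ k)]))
  have hexponent : -2 * N * (D * √(log (2 * (k + 1) / β) / (2 * N))) ^ 2 / D ^ 2 =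
      -log (2 * (k + 1) / β) := by
    rw [mul_pow, Real.sq_sqrt (div_nonneg hlog (by positivity))]
    field_simp
  rw [hexponent, Real.exp_neg, Real.exp_log (by positivity)]
  field_simp

lemma LipschitzWith.exists_forall_mem_Icc_diam {E : Type*} [PseudoMetricSpace E] {f : E → ℝ}
    {L : NNReal} (hf : LipschitzWith L f) {K : Set E} (hK : Bornology.IsBounded K)
    (hne : K.Nonempty) : ∃ m, ∀ x ∈ K, f x ∈ Icc m (m + L * Metric.diam K) := by
  have hlow {x y : E} (hx : x ∈ K) (hy : y ∈ K) : f x - L * Metric.diam K ≤ f y := by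
    have := (hf.dist_le_mul x y).trans
      (mul_le_mul_of_nonneg_left (Metric.dist_le_diam_of_mem hK hx hy) L.2)
    rw [Real.dist_eq] at this
    linarith [le_abs_self (f x - f y)]
  obtain ⟨x₀, hx₀⟩ := hne
  have hbdd : BddBelow (f '' K) := ⟨_, forall_mem_image.2 fun y hy => hlow hx₀ hy⟩
  refine ⟨sInf (f '' K), fun x hx => ⟨csInf_le hbdd (mem_image_of_mem f hx), ?_⟩⟩
  have := le_csInf ⟨_, mem_image_of_mem f hx⟩ (forall_mem_image.2 fun y hy => hlow hx hy)
  linarith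

theorem cvar_sample_complexity_general {n : ℕ} (hn : 3 ≤ n)
    (ν : Measure (EuclideanSpace ℝ (Fin n))) [IsProbabilityMeasure ν]
    (K : Set (EuclideanSpace ℝ (Fin n)))
    (hKfull : ν Kᶜ = 0)
    (hKbounded : Bornology.IsBounded K)
    (ρ : ℝ) (hρ : ρ = Metric.diam K) (hρpos : 0 < ρ)
    (L₀ : ℝ) (hL₀ : 0 < L₀) (h : EuclideanSpace ℝ (Fin n) → ℝ)
    (hLip : ∀ x y : EuclideanSpace ℝ (Fin n), |h x - h y| ≤ L₀ * ‖x - y‖)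
    (α : ℝ) (hα : α ∈ Set.Ioc (0 : ℝ) 1)
    (β : ℝ) (hβ : β ∈ Set.Ioo (0 : ℝ) 1)
    (H : ℝ) (hH : 0 < H)
    (Cstar : ℝ)
    (hC : Cstar = Real.sqrt n * (2 : ℝ) ^ (((n : ℝ) - 2) / 2) *
      (1 / (1 - (2 : ℝ) ^ (1 - (n : ℝ) / 2)) + 2))
    (N : ℕ) (hN : 1 ≤ N)
    (hsamp : (N : ℝ) ≥
      (L₀ * ρ * (Cstar + Real.sqrt n * Real.sqrt (2 * Real.log (1 / β))) / (α * H))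
        ^ (n : ℝ)) :
    (L₀ / α) * (ρ * (Cstar * (N : ℝ) ^ (-(1 : ℝ) / n) +
        Real.sqrt n * Real.sqrt (2 * Real.log (1 / β)) * (N : ℝ) ^ (-(1 : ℝ) / 2)))
      ≤ H ∧
    (Measure.pi fun _ : Fin N => ν)
      {ys : Fin N → EuclideanSpace ℝ (Fin n) |
        |CVaR α ((empiricalMeasure ys).map h) - CVaR α (ν.map h)| ≤ H}
      ≥ ENNReal.ofReal (1 - β) := by
  obtain ⟨hα0, hα1⟩ := hα
  obtain ⟨hβ0, hβ1⟩ := hβ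
  have hN1 : (1 : ℝ) ≤ N := by exact_mod_cast hN
  have hD : 0 < L₀ * ρ := mul_pos hL₀ hρpos
  have hC5 : 5 ≤ Cstar := hC ▸ five_le_sqrt_mul_rpow_mul (by exact_mod_cast hn)
  have hrate := mul_add_rpow_le_of_rpow_le hN1 (by exact_mod_cast (by omega : 2 ≤ n)) hD.le
    (mul_pos hα0 hH) (by linarith) (by positivity) hsamp
  refine ⟨by rw [mul_comm, ← mul_div_assoc, div_le_iff₀ hα0]; linarith, ?_⟩
  have hLipW : LipschitzWith (Real.toNNReal L₀) h :=
    LipschitzWith.of_dist_le' fun x y => by simpa [Real.dist_eq, dist_eq_norm] using hLip x y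
  obtain ⟨m, hm⟩ := hLipW.exists_forall_mem_Icc_diam hKbounded
    (nonempty_iff_ne_empty.2 fun hK => by simp [hK] at hρ; linarith)
  rw [Real.coe_toNNReal _ hL₀.le, ← hρ] at hm
  set k := ⌈(N : ℝ) ^ (n : ℝ)⁻¹⌉₊
  have hk : k ≠ 0 := (Nat.ceil_pos.2 (by positivity)).ne'
  set s := L₀ * ρ * √(log (2 * (k + 1) / β) / (2 * N))
  have herr : (s + 2 * (L₀ * ρ / k)) / α ≤ H := by
    rw [div_le_iff₀ hα0]
    calc _ = L₀ * ρ * (√(log (2 * (k + 1) / β) / (2 * N)) + 2 / k) := by ring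
      _ ≤ L₀ * ρ * (Cstar * (N : ℝ) ^ (-(1 : ℝ) / n) +
          √n * √(2 * log (1 / β)) * (N : ℝ) ^ (-(1 : ℝ) / 2)) :=
        mul_le_mul_of_nonneg_left (sqrt_log_div_add_two_div_le hN1 hn hβ0 hβ1.le hC5) hD.le
      _ ≤ H * α := by linarith
  have hprob := measure_abs_CVaR_empiricalMeasure_sub_le (by omega : N ≠ 0) ν
    hLipW.continuous.measurable hD ((ae_iff.2 hKfull).mono hm) hα0 hα1 hk (s := s) (by positivity)
  rw [mul_exp_neg_mul_sq_sqrt_log_div_eq hD.ne' hβ0 hβ1.le (by omega)] at hprob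
  exact hprob.trans (measure_mono fun ys hys => hys.trans herr)

/-- sample-complexity bound. If
`N ≥ ( L₀ ρ (C* + √n (2 ln(1/β))^{1/2}) / (α H) )^n` then the CVaR error bound
`(L₀/α)·ρ·(C* N^{−1/n} + √n (2 ln(1/β))^{1/2} N^{−1/2})` is at most `H`, and
consequently, with probability at least `1 − β` over `N` i.i.d. samples from
`ν`, the empirical CVaR of `h` is within `H` of the true CVaR. -/
theorem cvar_sample_complexity {n : ℕ} (hn : 3 ≤ n)
    (ν : Measure (EuclideanSpace ℝ (Fin n))) [IsProbabilityMeasure ν]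
    (K : Set (EuclideanSpace ℝ (Fin n)))
    (hKclosed : IsClosed K) (hKfull : ν Kᶜ = 0)
    (hKmin : ∀ C : Set (EuclideanSpace ℝ (Fin n)), IsClosed C → ν Cᶜ = 0 → K ⊆ C)
    (hKbounded : Bornology.IsBounded K)
    (ρ : ℝ) (hρ : ρ = Metric.diam K) (hρpos : 0 < ρ)
    (L₀ : ℝ) (hL₀ : 0 < L₀) (h : EuclideanSpace ℝ (Fin n) → ℝ)
    (hLip : ∀ x y : EuclideanSpace ℝ (Fin n), |h x - h y| ≤ L₀ * ‖x - y‖)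
    (α : ℝ) (hα : α ∈ Set.Ioc (0 : ℝ) 1)
    (β : ℝ) (hβ : β ∈ Set.Ioo (0 : ℝ) 1)
    (H : ℝ) (hH : 0 < H)
    (Cstar : ℝ)
    (hC : Cstar = Real.sqrt n * (2 : ℝ) ^ (((n : ℝ) - 2) / 2) *
      (1 / (1 - (2 : ℝ) ^ (1 - (n : ℝ) / 2)) + 2))
    (N : ℕ) (hN : 1 ≤ N)
    (hsamp : (N : ℝ) ≥
      (L₀ * ρ * (Cstar + Real.sqrt n * Real.sqrt (2 * Real.log (1 / β))) / (α * H))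
        ^ (n : ℝ)) :
    (L₀ / α) * (ρ * (Cstar * (N : ℝ) ^ (-(1 : ℝ) / n) +
        Real.sqrt n * Real.sqrt (2 * Real.log (1 / β)) * (N : ℝ) ^ (-(1 : ℝ) / 2)))
      ≤ H ∧
    (Measure.pi fun _ : Fin N => ν)
      {ys : Fin N → EuclideanSpace ℝ (Fin n) |
        |CVaR α ((empiricalMeasure ys).map h) - CVaR α (ν.map h)| ≤ H}
      ≥ ENNReal.ofReal (1 - β) :=
  cvar_sample_complexity_general hn ν K hKfull hKbounded ρ hρ hρpos L₀ hL₀ h hLip α hα β hβ H hH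
    Cstar hC N hN hsamp
end

section
/- Let X be a real-valued random variable with law μ of finite first moment whose cumulative distribution function F(y) = μ((−∞, y]) is continuous, and let α ∈ (0,1). Define VaR_α(μ) = inf{ y ∈ ℝ : F(y) ≥ 1 − α }. Then μ((VaR_α(μ), ∞)) = α, and the variational Conditional Value at Risk coincides with the tail expectation: inf_{t ∈ ℝ} ( t + (1/α) ∫ max(z − t, 0) dμ(z) ) = (1/α) ∫_{(VaR_α(μ), ∞)} z dμ(z). -/
/-! If the CDF `F` is continuous, `v = VaR_α` is the least point with `F v ≥ 1 - α`, and continuity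
from the left forces `F v = 1 - α`, so the tail `(v, ∞)` has mass exactly `α`. For every `t`,
`max (z - t) 0 ≥ 𝟙_{z > v} (z - t)`, which gives
`t + (1/α) ∫ (z - t)⁺ dμ ≥ t + (1/α) (∫_{(v,∞)} z dμ - t α) = (1/α) ∫_{(v,∞)} z dμ`,
with equality at `t = v`. -/

open MeasureTheory ProbabilityTheory Set Filter

section Quantile

variable {X Y : Type*} [ConditionallyCompleteLinearOrder X] [TopologicalSpace X] [OrderTopology X]
  [DenselyOrdered X] [NoMinOrder X] [LinearOrder Y] [TopologicalSpace Y] [OrderClosedTopology Y]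

theorem Continuous.apply_csInf_setOf_le_eq {F : X → Y} (hF : Continuous F) {p : Y}
    (hne : {y | p ≤ F y}.Nonempty) (hbdd : BddBelow {y | p ≤ F y}) :
    F (sInf {y | p ≤ F y}) = p := by
  set v := sInf {y | p ≤ F y}
  have hle : p ≤ F v := (isClosed_le continuous_const hF).csInf_mem hne hbdd
  have hbelow : Iio v ⊆ {y | F y ≤ p} := fun y hy =>
    (not_le.1 (notMem_of_lt_csInf (s := {y | p ≤ F y}) hy hbdd)).le
  have hv : v ∈ closure (Iio v) := by rw [closure_Iio]; exact mem_Iic.2 le_rfl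
  exact le_antisymm ((isClosed_le hF continuous_const).closure_subset_iff.2 hbelow hv) hle

end Quantile

namespace ProbabilityTheory

theorem cdf_csInf_setOf_le_cdf_eq (μ : Measure ℝ) (hF : Continuous (cdf μ)) {p : ℝ}
    (hp : p ∈ Ioo 0 1) :
    cdf μ (sInf {y | p ≤ cdf μ y}) = p := by
  refine hF.apply_csInf_setOf_le_eq ((tendsto_cdf_atTop μ).eventually_const_le hp.2).exists ?_
  obtain ⟨y₀, hy₀⟩ := ((tendsto_cdf_atBot μ).eventually_lt_const hp.1).exists
  exact ⟨y₀, fun y hy => le_of_not_gt fun hlt => (hy.trans (monotone_cdf μ hlt.le)).not_gt hy₀⟩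

theorem measure_Ioi_eq_ofReal_one_sub_cdf (μ : Measure ℝ) [IsProbabilityMeasure μ] (x : ℝ) :
    μ (Ioi x) = ENNReal.ofReal (1 - cdf μ x) := by
  rw [← compl_Iic, prob_compl_eq_one_sub measurableSet_Iic, ← ofReal_cdf,
    ENNReal.ofReal_sub _ (cdf_nonneg μ x), ENNReal.ofReal_one]

end ProbabilityTheory

section CVaR

variable {μ : Measure ℝ}

theorem integral_max_sub_zero_eq_setIntegral_Ioi (v : ℝ) :
    ∫ z, max (z - v) 0 ∂μ = ∫ z in Ioi v, (z - v) ∂μ := by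
  rw [← integral_indicator measurableSet_Ioi]
  congr 1 with z
  by_cases hz : v < z
  · simp [hz, hz.le]
  · simp [hz, not_lt.1 hz]

variable [IsFiniteMeasure μ]

theorem setIntegral_sub_le_integral_max_sub_zero (hInt : Integrable id μ) {s : Set ℝ}
    (hs : MeasurableSet s) (t : ℝ) :
    ∫ z in s, (z - t) ∂μ ≤ ∫ z, max (z - t) 0 ∂μ := by
  have hsub : Integrable (fun z => z - t) μ := hInt.sub (integrable_const t)
  rw [← integral_indicator hs]
  refine integral_mono (hsub.indicator hs) hsub.pos_part fun z => ?_
  by_cases hz : z ∈ s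
  · simp [indicator_of_mem hz]
  · simp [indicator_of_notMem hz]

theorem setIntegral_sub_const (hInt : Integrable id μ) (s : Set ℝ) (t : ℝ) :
    ∫ z in s, (z - t) ∂μ = ∫ z in s, z ∂μ - t * μ.real s := by
  rw [integral_sub (f := fun z => z) hInt.integrableOn (integrable_const t),
    setIntegral_const, smul_eq_mul, mul_comm]

theorem iInf_add_integral_max_sub_zero_eq (hInt : Integrable id μ) {v α : ℝ}
    (hv : μ.real (Ioi v) = α) (hα : 0 < α) :
    ⨅ t : ℝ, (t + (1 / α) * ∫ z, max (z - t) 0 ∂μ) = (1 / α) * ∫ z in Ioi v, z ∂μ := by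
  have hge : ∀ t : ℝ, (1 / α) * ∫ z in Ioi v, z ∂μ ≤ t + (1 / α) * ∫ z, max (z - t) 0 ∂μ := by
    intro t
    have h := setIntegral_sub_le_integral_max_sub_zero hInt (s := Ioi v) measurableSet_Ioi t
    rw [setIntegral_sub_const hInt, hv] at h
    calc (1 / α) * ∫ z in Ioi v, z ∂μ
        = t + (1 / α) * (∫ z in Ioi v, z ∂μ - t * α) := by field_simp; ring
      _ ≤ t + (1 / α) * ∫ z, max (z - t) 0 ∂μ := by gcongr
  have hat_v : v + (1 / α) * ∫ z, max (z - v) 0 ∂μ = (1 / α) * ∫ z in Ioi v, z ∂μ := by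
    rw [integral_max_sub_zero_eq_setIntegral_Ioi, setIntegral_sub_const hInt, hv]
    field_simp
    ring
  refine le_antisymm ?_ (le_ciInf hge)
  exact hat_v ▸ ciInf_le ⟨_, forall_mem_range.2 hge⟩ v

end CVaR

/-- for a real distribution `μ` with finite first moment and
continuous CDF `F(y) = μ((−∞, y])`, and `α ∈ (0,1)`, the Value at Risk
`VaR_α(μ) = inf{y : F(y) ≥ 1 − α}` satisfies `μ((VaR_α, ∞)) = α`, and the
variational CVaR equals the tail expectation:
`inf_t ( t + (1/α) ∫ max(z − t, 0) dμ ) = (1/α) ∫_{(VaR_α, ∞)} z dμ`. -/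
theorem cvar_eq_tail_expectation (μ : Measure ℝ) [IsProbabilityMeasure μ]
    (hInt : Integrable id μ)
    (hF : Continuous fun y : ℝ => (μ (Set.Iic y)).toReal)
    (α : ℝ) (hα : α ∈ Set.Ioo (0 : ℝ) 1)
    (v : ℝ) (hv : v = sInf {y : ℝ | 1 - α ≤ (μ (Set.Iic y)).toReal}) :
    μ (Set.Ioi v) = ENNReal.ofReal α ∧
    (⨅ t : ℝ, (t + (1 / α) * ∫ z, max (z - t) 0 ∂μ))
      = (1 / α) * ∫ z in Set.Ioi v, z ∂μ := by
  have hcdf (y : ℝ) : (μ (Iic y)).toReal = cdf μ y := by rw [cdf_eq_real, measureReal_def]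
  simp only [hcdf] at hF hv
  have hv_cdf : cdf μ v = 1 - α := by
    rw [hv]
    exact cdf_csInf_setOf_le_cdf_eq μ hF ⟨by linarith [hα.2], by linarith [hα.1]⟩
  have hIoi : μ (Ioi v) = ENNReal.ofReal α := by
    rw [measure_Ioi_eq_ofReal_one_sub_cdf, hv_cdf, sub_sub_cancel]
  refine ⟨hIoi, iInf_add_integral_max_sub_zero_eq hInt ?_ hα.1⟩
  rw [measureReal_def, hIoi, ENNReal.toReal_ofReal hα.1.le]
end
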